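/- arXiv:2409.18650 — 2 statements merged into one kernel-verified Lean document; each statement's English description precedes it below -/
import Mathlib

section
/- For every x ∈ c_c, the subdifferential of f at x is empty: there exists no continuous linear functional x* on (c_c, ‖·‖_{ℓ²}) such that f(y) ≥ f(x) + x*(y − x) for all y ∈ c_c. -/
open scoped ENNReal

noncomputable section

abbrev ell2 : Type := lp (fun _ : ℕ => ℝ) 2

lemma memℓp_of_finite_support {x : ℕ → ℝ} (h : (Function.support x).Finite) :
    Memℓp x 2 := by
  apply memℓp_gen
  apply summable_of_finite_support
  refine h.subset ?_
  intro n hn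
  simp only [Function.mem_support] at hn ⊢
  intro h0
  exact hn (by simp [h0])

def ccSubmodule : Submodule ℝ ell2 where
  carrier := {x | (Function.support fun n => (x : ℕ → ℝ) n).Finite}
  add_mem' := by
    intro a b ha hb
    refine Set.Finite.subset (ha.union hb) ?_
    intro n hn
    simp only [Function.mem_support, Set.mem_union] at hn ⊢
    by_contra h
    push_neg at h
    exact hn (by simp [lp.coeFn_add, h.1, h.2])
  zero_mem' := by
    simp only [Set.mem_setOf_eq]
    convert Set.finite_empty
    ext n
    simp [lp.coeFn_zero]
  smul_mem' := by
    intro c a ha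
    refine Set.Finite.subset ha ?_
    intro n hn
    simp only [Function.mem_support] at hn ⊢
    intro h
    exact hn (by simp [lp.coeFn_smul, h])

abbrev cc : Type := ccSubmodule

def seqOf (x : cc) : ℕ → ℝ := fun n => ((x : ell2) : ℕ → ℝ) n

def fSeq (x : ℕ → ℝ) : ℝ :=
  ∑' n : ℕ, (((n : ℝ) + 1) ^ 2 / 2) * (x n - (((n : ℝ) + 1) ^ 2)⁻¹) ^ 2

def fcc (x : cc) : ℝ := fSeq (seqOf x)

/-- The standard unit sequence `e_n` as an element of `c_c`. -/
def eVec (n : ℕ) : cc :=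
  ⟨lp.single 2 n (1 : ℝ), by
    refine Set.Finite.subset (Set.finite_singleton n) ?_
    intro m hm
    simp only [Function.mem_support] at hm
    by_contra hmn
    exact hm (lp.single_apply_ne 2 n _ (by simpa using hmn))⟩

/-- The backward-difference operation on raw sequences, with `x_{-1} := 0`. -/
def Aseq (x : ℕ → ℝ) : ℕ → ℝ := fun n => x n - (if n = 0 then 0 else x (n - 1))

lemma support_Aseq {x : ℕ → ℝ} (h : (Function.support x).Finite) :
    (Function.support (Aseq x)).Finite := by
  refine Set.Finite.subset (h.union (h.image (· + 1))) ?_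
  intro n hn
  simp only [Function.mem_support, Aseq] at hn
  by_contra hc
  simp only [Set.mem_union, Function.mem_support, Set.mem_image, not_or, not_exists] at hc
  obtain ⟨h1, h2⟩ := hc
  apply hn
  rcases n with _ | m
  · simpa using h1
  · have hx1 : x (m + 1) = 0 := not_not.mp h1
    have hx : x m = 0 := by
      by_contra hxm
      exact (h2 m ⟨hxm, rfl⟩).elim
    simp [hx1, hx]

lemma mem_ccSubmodule_of_mk {x : ℕ → ℝ} (hx : Memℓp x 2)
    (h : (Function.support x).Finite) : (⟨x, hx⟩ : ell2) ∈ ccSubmodule := h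

/-- The operator `A : c_c → c_c`, `(Ax)_n = x_n - x_{n-1}` (with `x_{-1} := 0`). -/
def Aop (x : cc) : cc :=
  ⟨⟨Aseq (seqOf x), memℓp_of_finite_support (support_Aseq x.2)⟩,
    mem_ccSubmodule_of_mk _ (support_Aseq x.2)⟩

/-- The Fenchel conjugate of `f`, as a function on `ℓ²`. -/
def fstar (y : ell2) : ℝ :=
  ∑' n : ℕ, (((n : ℝ) + 1) ^ 2)⁻¹ *
    ((1 / 2) * ((y : ℕ → ℝ) n) ^ 2 + (y : ℕ → ℝ) n)

/-- The (formal) adjoint of `A`, acting on `ℓ²` sequences: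
`(A*y)_n = y_n - y_{n+1}`. -/
def AstarSeq (y : ell2) : ℕ → ℝ := fun n => (y : ℕ → ℝ) n - (y : ℕ → ℝ) (n + 1)

/-! Along a coordinate direction `e_n`, `t ↦ f (x + t e_n)` is a quadratic polynomial in `t`, so a
subgradient `x*` at `x` must equal its derivative there: `x* e_n = (n + 1)² x_n - 1` (sequences
are indexed from `0` here). Beyond the support of `x` this gives `x* e_n = -1`, which contradicts
Bessel's inequality `∑_{n ∈ S} (x* e_n)² ≤ ‖x*‖²` once `#S > ‖x*‖²`. -/

theorem eq_of_forall_mul_le_mul_add_sq {s d P : ℝ} (hP : 0 ≤ P)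
    (h : ∀ t : ℝ, t * s ≤ t * d + P * t ^ 2) : s = d := by
  -- at `t = u`, the hypothesis reads `(P + 1) * u ^ 2 ≤ P * u ^ 2`
  obtain ⟨u, hu⟩ : ∃ u, s - d = (P + 1) * u := ⟨(s - d) / (P + 1), by field_simp⟩
  have hu0 : u = 0 := by nlinarith [h u, sq_nonneg u]
  linarith [hu0 ▸ hu]

def fTerm (n : ℕ) (a : ℝ) : ℝ := (((n : ℝ) + 1) ^ 2 / 2) * (a - (((n : ℝ) + 1) ^ 2)⁻¹) ^ 2

theorem fSeq_eq_tsum_fTerm (x : ℕ → ℝ) : fSeq x = ∑' n, fTerm n (x n) := rfl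

theorem fTerm_add (n : ℕ) (a t : ℝ) :
    fTerm n (a + t) = fTerm n a +
      ((n : ℝ) + 1) ^ 2 * (t * (a - (((n : ℝ) + 1) ^ 2)⁻¹) + t ^ 2 / 2) := by
  unfold fTerm
  ring

theorem summable_fTerm {x : ℕ → ℝ} (hx : (Function.support x).Finite) :
    Summable fun n => fTerm n (x n) := by
  have hzero : Summable fun n : ℕ => fTerm n 0 := by
    have := (summable_nat_add_iff 1).2 (Real.summable_one_div_nat_pow.2 one_lt_two)
    refine (this.mul_left (1 / 2)).congr fun n => ?_
    unfold fTerm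
    push_cast
    field_simp
    ring
  refine hzero.congr_cofinite ?_
  filter_upwards [hx.compl_mem_cofinite] with n hn
  rw [Function.notMem_support.1 hn]

theorem fSeq_update {x : ℕ → ℝ} (hx : (Function.support x).Finite) (n : ℕ) (a : ℝ) :
    fSeq (Function.update x n a) = fSeq x + (fTerm n a - fTerm n (x n)) := by
  rw [fSeq_eq_tsum_fTerm, fSeq_eq_tsum_fTerm, funext (Function.apply_update (fun m b => fTerm m b) x n a),
    ((summable_fTerm hx).hasSum.update n (fTerm n a)).tsum_eq]
  ring

theorem seqOf_add_smul_eVec (x : cc) (n : ℕ) (t : ℝ) :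
    seqOf (x + t • eVec n) = Function.update (seqOf x) n (seqOf x n + t) := by
  ext m
  simp only [seqOf, eVec, Submodule.coe_add, SetLike.val_smul]
  rw [lp.coeFn_add, Pi.add_apply, lp.coeFn_smul, Pi.smul_apply, lp.single_apply]
  rcases eq_or_ne m n with rfl | hm
  · simp
  · simp [hm, seqOf]

theorem fcc_add_smul_eVec (x : cc) (n : ℕ) (t : ℝ) :
    fcc (x + t • eVec n) = fcc x +
      ((n : ℝ) + 1) ^ 2 * (t * (seqOf x n - (((n : ℝ) + 1) ^ 2)⁻¹) + t ^ 2 / 2) := by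
  rw [fcc, seqOf_add_smul_eVec, fSeq_update (x := seqOf x) x.2, fTerm_add, fcc]
  ring

theorem coe_sum_smul_eVec (c : ℕ → ℝ) (S : Finset ℕ) :
    ((∑ i ∈ S, c i • eVec i : cc) : ell2) = ∑ i ∈ S, lp.single 2 i (c i) := by
  rw [Submodule.coe_sum]
  refine Finset.sum_congr rfl fun i _ => ?_
  rw [Submodule.coe_smul, eVec, ← lp.single_smul, smul_eq_mul, mul_one]

theorem norm_sum_smul_eVec_sq (c : ℕ → ℝ) (S : Finset ℕ) :
    ‖∑ i ∈ S, c i • eVec i‖ ^ 2 = ∑ i ∈ S, c i ^ 2 := by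
  have h := lp.norm_sum_single (p := 2) (by norm_num) c S
  simp only [ENNReal.toReal_ofNat, Real.rpow_two, Real.norm_eq_abs, sq_abs] at h
  rw [← h, ← coe_sum_smul_eVec]
  rfl

theorem sum_sq_apply_eVec_le (φ : cc →L[ℝ] ℝ) (S : Finset ℕ) :
    ∑ i ∈ S, φ (eVec i) ^ 2 ≤ ‖φ‖ ^ 2 := by
  set y : cc := ∑ i ∈ S, φ (eVec i) • eVec i
  have hφy : φ y = ∑ i ∈ S, φ (eVec i) ^ 2 := by
    simp only [y, map_sum, map_smul, smul_eq_mul, sq]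
  have hy : ‖y‖ ^ 2 = ∑ i ∈ S, φ (eVec i) ^ 2 := norm_sum_smul_eVec_sq _ S
  have hle : φ y ≤ ‖φ‖ * ‖y‖ := (le_abs_self _).trans (φ.le_opNorm y)
  nlinarith [sq_nonneg (‖φ‖ - ‖y‖)]

theorem apply_eVec_of_subgradient {x : cc} {xs : cc →L[ℝ] ℝ}
    (h : ∀ y : cc, fcc y ≥ fcc x + xs (y - x)) (n : ℕ) :
    xs (eVec n) = ((n : ℝ) + 1) ^ 2 * (seqOf x n - (((n : ℝ) + 1) ^ 2)⁻¹) := by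
  refine eq_of_forall_mul_le_mul_add_sq (P := ((n : ℝ) + 1) ^ 2 / 2) (by positivity) fun t => ?_
  have := h (x + t • eVec n)
  rw [fcc_add_smul_eVec, add_sub_cancel_left, map_smul, smul_eq_mul] at this
  linarith

/-- the subdifferential of `f` is empty at every point of `c_c`. -/
theorem subdifferential_empty (x : cc) :
    ¬ ∃ xs : cc →L[ℝ] ℝ, ∀ y : cc, fcc y ≥ fcc x + xs (y - x) := by
  rintro ⟨xs, h⟩
  obtain ⟨N, hN⟩ := x.2.bddAbove
  set K := ⌈‖xs‖ ^ 2⌉₊ + 1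
  have h_tail : ∀ n ∈ Finset.Ioc N (N + K), xs (eVec n) ^ 2 = 1 := by
    intro n hn
    have hxn : seqOf x n = 0 := Function.notMem_support.1 fun hn' =>
      (Finset.mem_Ioc.1 hn).1.not_ge (hN hn')
    rw [apply_eVec_of_subgradient h, hxn]
    field_simp
    ring
  have hK := sum_sq_apply_eVec_le xs (Finset.Ioc N (N + K))
  rw [Finset.sum_congr rfl h_tail, Finset.sum_const, Nat.card_Ioc, Nat.add_sub_cancel_left,
    nsmul_one] at hK
  have := Nat.le_ceil (‖xs‖ ^ 2)
  push_cast [K] at hK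
  linarith
end
end

section
/- The Fenchel primal–dual pair min_{x∈c_c} [f(Ax) + g(x)] with g ≡ 0 and sup_{y∈ℓ²} [−f*(y) − g*(−A*y)] exhibits a positive duality gap: the primal optimal value is π²/12 while the dual optimal value is 0. -/
open scoped ENNReal

noncomputable section

/-! For `x ∈ c_c` the sequence `z = Ax` has finite support and `∑ z_n = 0` by telescoping.
Expanding the square, `f z = ∑ (n²/2) z_n² - ∑ z_n + ∑ 1/(2n²) ≥ ∑ 1/(2n²) = π²/12`, with
equality at `x = 0`. On the dual side `A*y = 0` makes `y` constant, and the only constant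
sequence in `ℓ²` is `0`, so the dual value is `-f*(0) = 0`. -/

open Filter Topology Finset

theorem hasSum_inv_succ_sq :
    HasSum (fun n : ℕ => (((n : ℝ) + 1) ^ 2)⁻¹) (Real.pi ^ 2 / 6) := by
  simpa using (hasSum_nat_add_iff' 1).mpr hasSum_zeta_two

theorem hasSum_inv_succ_sq_div_two :
    HasSum (fun n : ℕ => (((n : ℝ) + 1) ^ 2)⁻¹ / 2) (Real.pi ^ 2 / 12) := by
  have h := hasSum_inv_succ_sq.div_const 2
  rwa [show Real.pi ^ 2 / 6 / 2 = Real.pi ^ 2 / 12 by ring] at h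

theorem half_mul_sq_sub_inv_eq {w : ℝ} (hw : w ≠ 0) (t : ℝ) :
    w / 2 * (t - w⁻¹) ^ 2 = w / 2 * t ^ 2 - t + w⁻¹ / 2 := by
  field_simp
  ring

theorem le_tsum_half_mul_sq_sub_inv {w z : ℕ → ℝ} {S : ℝ} (hw : ∀ n, 0 < w n)
    (hS : HasSum (fun n => (w n)⁻¹ / 2) S) (hz : HasSum z 0)
    (hq : Summable fun n => w n / 2 * z n ^ 2) :
    S ≤ ∑' n, w n / 2 * (z n - (w n)⁻¹) ^ 2 := by
  have hexp : (fun n => w n / 2 * (z n - (w n)⁻¹) ^ 2)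
      = fun n => w n / 2 * z n ^ 2 + (-z n + (w n)⁻¹ / 2) := by
    funext n
    rw [half_mul_sq_sub_inv_eq (hw n).ne']
    ring
  have hlin : HasSum (fun n => -z n + (w n)⁻¹ / 2) S := by
    simpa using hz.neg.add hS
  rw [hexp, hlin.tsum_eq.symm]
  refine Summable.tsum_le_tsum (fun n => ?_) hlin.summable (hq.add hlin.summable)
  have : 0 ≤ w n / 2 * z n ^ 2 := by have := hw n; positivity
  linarith

theorem pi_sq_div_twelve_le_fSeq {z : ℕ → ℝ} (hfin : (Function.support z).Finite)
    (hz : HasSum z 0) : Real.pi ^ 2 / 12 ≤ fSeq z := by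
  refine le_tsum_half_mul_sq_sub_inv (fun n => by positivity) hasSum_inv_succ_sq_div_two hz ?_
  refine summable_of_hasFiniteSupport (hfin.subset fun n hn => ?_)
  simp_all

theorem fSeq_zero : fSeq 0 = Real.pi ^ 2 / 12 := by
  refine (hasSum_inv_succ_sq_div_two.congr_fun fun n => ?_).tsum_eq
  rw [Pi.zero_apply, half_mul_sq_sub_inv_eq (by positivity)]
  ring

theorem sum_range_succ_Aseq (x : ℕ → ℝ) (m : ℕ) : ∑ n ∈ range (m + 1), Aseq x n = x m := by
  induction m with
  | zero => simp [Aseq]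
  | succ k ih => rw [sum_range_succ, ih]; simp [Aseq]

theorem hasSum_Aseq_zero {x : ℕ → ℝ} (h : (Function.support x).Finite) :
    HasSum (Aseq x) 0 := by
  have hx : Tendsto x atTop (𝓝 0) := by
    rw [← Nat.cofinite_eq_atTop]
    exact tendsto_nhds_of_eventually_eq
      (h.eventually_cofinite_notMem.mono fun n hn => Function.notMem_support.mp hn)
  refine (summable_of_hasFiniteSupport (support_Aseq h)).hasSum_iff_tendsto_nat.mpr
    ((tendsto_add_atTop_iff_nat 1).mp ?_)
  simpa only [sum_range_succ_Aseq] using hx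

theorem Aseq_zero : Aseq 0 = 0 := by
  funext n
  simp [Aseq]

theorem seqOf_zero : seqOf 0 = 0 := by
  funext n
  simp [seqOf]

theorem seqOf_Aop (x : cc) : seqOf (Aop x) = Aseq (seqOf x) := rfl

theorem fcc_Aop_zero : fcc (Aop 0) = Real.pi ^ 2 / 12 := by
  rw [fcc, seqOf_Aop, seqOf_zero, Aseq_zero, fSeq_zero]

theorem pi_sq_div_twelve_le_fcc_Aop (x : cc) : Real.pi ^ 2 / 12 ≤ fcc (Aop x) :=
  pi_sq_div_twelve_le_fSeq (support_Aseq x.2) (hasSum_Aseq_zero x.2)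

theorem eq_zero_of_memℓp_const {ι E : Type*} [Infinite ι] [NormedAddCommGroup E]
    {p : ℝ≥0∞} (hp : 0 < p.toReal) {c : E} (h : Memℓp (fun _ : ι => c) p) : c = 0 := by
  have hc : ‖c‖ ^ p.toReal = 0 := (summable_const_iff _).mp (h.summable hp)
  exact norm_eq_zero.mp ((Real.rpow_eq_zero (norm_nonneg c) hp.ne').mp hc)

theorem eq_zero_of_AstarSeq_eq_zero {y : ell2} (h : ∀ n, AstarSeq y n = 0) : y = 0 := by
  have hconst : ∀ n, (y : ℕ → ℝ) n = (y : ℕ → ℝ) 0 := by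
    intro n
    induction n with
    | zero => rfl
    | succ k ih => rw [← ih, eq_comm, ← sub_eq_zero]; exact h k
  have hy : (y : ℕ → ℝ) = fun _ => (y : ℕ → ℝ) 0 := funext hconst
  have hy0 : (y : ℕ → ℝ) 0 = 0 :=
    eq_zero_of_memℓp_const (p := 2) (by norm_num) (hy ▸ lp.memℓp y)
  ext n
  rw [hconst, hy0]
  rfl

theorem fstar_zero : fstar 0 = 0 := by
  simp [fstar]

/-- positive duality gap: the primal value of
`min f(Ax) + g(x)` with `g ≡ 0` is `π²/12` (attained), the dual value of
`sup -f*(y) - g*(-A*y)` is `0` (the only feasible point being `y = 0`,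
since `g* = δ_{{0}}`), and `0 < π²/12`. -/
theorem positive_duality_gap :
    IsLeast {r : ℝ | ∃ x : cc, r = fcc (Aop x) + (fun _ : cc => (0 : ℝ)) x}
      (Real.pi ^ 2 / 12) ∧
    IsGreatest {r : ℝ | ∃ y : ell2, (∀ n : ℕ, AstarSeq y n = 0) ∧ r = -fstar y}
      (0 : ℝ) ∧
    (0 : ℝ) < Real.pi ^ 2 / 12 := by
  refine ⟨⟨⟨0, by simp [fcc_Aop_zero]⟩, ?_⟩,
    ⟨⟨0, fun n => by simp [AstarSeq], by simp [fstar_zero]⟩, ?_⟩, by positivity⟩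
  · rintro r ⟨x, rfl⟩
    simpa using pi_sq_div_twelve_le_fcc_Aop x
  · rintro r ⟨y, hy, rfl⟩
    rw [eq_zero_of_AstarSeq_eq_zero hy, fstar_zero, neg_zero]
end
end
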